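/- arXiv:2411.07896 — 3 statements merged into one kernel-verified Lean document; each statement's English description precedes it below -/
import Mathlib

section
/- Let B be a ring that is finite as a Z_p-algebra (finitely generated as a Z_p-module). Then the J(B)-adic topology and the p-adic topology on B are equivalent: p ∈ J(B) and there exists d ≥ 1 with J(B)^d ⊆ pB. -/
/-!
Since `p` lies in the maximal ideal of `ℤ_[p]` and `B` is a finite `ℤ_[p]`-module, Nakayama's
lemma puts `p` in every maximal left ideal of `B`. The ring `B ⧸ pB` is a finite module over
`ℤ_[p] ⧸ p = 𝔽_p`, hence a finite and so Artinian ring; its Jacobson radical is therefore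
nilpotent, and since `J(B)` maps into `J(B ⧸ pB)`, long enough products of elements of `J(B)`
vanish modulo `p`.
-/

open Ideal

theorem Ideal.prod_ofFn_mem_pow {R : Type*} [Semiring R] {I : Ideal R} :
    ∀ {n : ℕ} {x : Fin n → R}, (∀ i, x i ∈ I) → (List.ofFn x).prod ∈ I ^ n
  | 0, _, _ => by rw [Submodule.pow_zero, one_eq_top]; trivial
  | n + 1, x, hx => by
    rw [List.ofFn_succ', List.prod_concat, Submodule.pow_succ]
    exact mul_mem_mul (prod_ofFn_mem_pow fun i => hx i.castSucc) (hx (Fin.last n))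

theorem Ideal.isTwoSided_span_singleton_of_commute {R : Type*} [Semiring R] {c : R}
    (hc : ∀ b, Commute c b) : (span {c}).IsTwoSided where
  mul_mem_of_left b ha := by
    obtain ⟨a, rfl⟩ := mem_span_singleton'.mp ha
    rw [mul_assoc, hc b, ← mul_assoc]
    exact mul_mem_left _ _ (mem_span_singleton_self c)

theorem Ring.exists_prod_mem_of_isArtinianRing_quotient {R : Type*} [Ring R] (I : Ideal R)
    [I.IsTwoSided] [IsArtinianRing (R ⧸ I)] :
    ∃ n, 0 < n ∧ ∀ x : Fin n → R, (∀ i, x i ∈ Ring.jacobson R) → (List.ofFn x).prod ∈ I := by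
  obtain ⟨n, hn⟩ := IsArtinianRing.isNilpotent_jacobson_bot (R := R ⧸ I)
  refine ⟨n + 1, n.succ_pos, fun x hx => ?_⟩
  have himage : ∀ i, Ideal.Quotient.mk I (x i) ∈ Ring.jacobson (R ⧸ I) := fun i =>
    Ring.map_jacobson_le (Ideal.Quotient.mk I) ⟨x i, hx i, rfl⟩
  have hzero : Ring.jacobson (R ⧸ I) ^ (n + 1) = ⊥ := by
    rw [Ideal.jacobson_bot] at hn
    exact le_bot_iff.mp ((Ideal.pow_le_pow_right n.le_succ).trans hn.le)
  rw [← Quotient.eq_zero_iff_mem, map_list_prod, List.map_ofFn, ← Submodule.mem_bot (R ⧸ I),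
    ← hzero]
  exact prod_ofFn_mem_pow himage

theorem Ring.algebraMap_mem_jacobson {R A : Type*} [CommRing R] [Ring A] [Algebra R A]
    [Module.Finite R A] {r : R} (hr : r ∈ Ring.jacobson R) :
    algebraMap R A r ∈ Ring.jacobson A := by
  rw [Ring.jacobson_eq_sInf_isMaximal, Submodule.mem_sInf]
  rintro m (hm : Ideal.IsMaximal m)
  by_contra hrm
  obtain ⟨y, i, hi, hyi⟩ := hm.exists_inv hrm
  -- `A = m + r • A` as `R`-modules, so Nakayama over `R` gives `m = A`.
  have htop : ⊤ ≤ m.restrictScalars R ⊔ span {r} • ⊤ := by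
    intro b _
    have hb : b = r • (b * y) + b * i := calc
      b = b * (y * algebraMap R A r + i) := by rw [hyi, mul_one]
      _ = r • (b * y) + b * i := by rw [mul_add, Algebra.smul_def, Algebra.commutes, mul_assoc]
    rw [hb]
    exact add_mem
      (Submodule.mem_sup_right (Submodule.smul_mem_smul (mem_span_singleton_self r) trivial))
      (Submodule.mem_sup_left (Ideal.mul_mem_left m b hi))
  have hle := Submodule.le_of_le_smul_of_le_jacobson_bot Module.Finite.fg_top
    ((span_singleton_le_iff_mem _).mpr (by rwa [jacobson_bot])) htop
  exact hm.ne_top ((eq_top_iff_one m).mpr (hle trivial))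

theorem Ideal.finite_quotient_span_algebraMap {R A : Type*} [CommRing R] [Ring A] [Algebra R A]
    [Module.Finite R A] (r : R) [Finite (R ⧸ span {r})] :
    Finite (A ⧸ span {algebraMap R A r}) := by
  have hle : span {r} • (⊤ : Submodule R A) ≤ (span {algebraMap R A r}).restrictScalars R := by
    rw [Submodule.smul_le]
    intro s hs b _
    obtain ⟨t, rfl⟩ := mem_span_singleton'.mp hs
    rw [Algebra.smul_def, map_mul, mul_assoc, Algebra.commutes r b, ← mul_assoc]
    exact mul_mem_left _ _ (mem_span_singleton_self _)
  have : Finite (A ⧸ span {r} • (⊤ : Submodule R A)) := Module.finite_of_finite (R ⧸ span {r})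
  exact Finite.of_surjective _ ((Submodule.Quotient.restrictScalarsEquiv R _).surjective.comp
    (Submodule.factor_surjective hle))

/-- Let `B` be a ring that is finite as a `ℤ_p`-algebra. Then the
`J(B)`-adic and the `p`-adic topologies on `B` agree: `p ∈ J(B)` and there is `d ≥ 1`
with `J(B)^d ⊆ pB`. -/
theorem jacobson_adic_eq_p_adic
    (p : ℕ) [Fact p.Prime] (B : Type*) [Ring B] [Algebra ℤ_[p] B]
    [Module.Finite ℤ_[p] B] :
    (p : B) ∈ (⊥ : Ideal B).jacobson ∧
      ∃ d : ℕ, 1 ≤ d ∧ ∀ x : Fin d → B,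
        (∀ i, x i ∈ (⊥ : Ideal B).jacobson) →
          (List.ofFn x).prod ∈ Ideal.span {(p : B)} := by
  have hp_jacobson : (p : ℤ_[p]) ∈ Ring.jacobson ℤ_[p] := by
    rw [← Ideal.jacobson_bot, IsLocalRing.jacobson_eq_maximalIdeal ⊥ bot_ne_top,
      PadicInt.maximalIdeal_eq_span_p]
    exact mem_span_singleton_self _
  have : Finite (ℤ_[p] ⧸ span {(p : ℤ_[p])}) := by
    rw [← PadicInt.maximalIdeal_eq_span_p]
    infer_instance
  have := isTwoSided_span_singleton_of_commute (Algebra.commutes (A := B) (p : ℤ_[p]))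
  have := finite_quotient_span_algebraMap (A := B) (p : ℤ_[p])
  rw [Ideal.jacobson_bot, ← map_natCast (algebraMap ℤ_[p] B)]
  exact ⟨Ring.algebraMap_mem_jacobson hp_jacobson,
    Ring.exists_prod_mem_of_isArtinianRing_quotient _⟩
end

section
/- Let A be a semi-simple algebra over a field k and let M be a finitely generated left A-module with an endomorphism θ. Then θ is semi-simple at 0 (i.e. M admits a θ-equivariant direct sum decomposition M = V ⊕ W with θ|_V = 0 and θ|_W an automorphism of W) if and only if the canonical map ker(θ) → M → coker(θ) (inclusion followed by projection) is an isomorphism. -/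
/-!
Both sides say that `M = ker θ ⊕ range θ`. For the canonical map this is the statement that
`ker θ` is a complement of `range θ`. For a decomposition `M = V ⊕ W` as in the theorem,
`θ` kills `V` and permutes `W`, so `range θ = θ(V ⊕ W) = θ W = W`, and injectivity on `W`
forces `ker θ = V` by the modular law; conversely `V = ker θ`, `W = range θ` is such a
decomposition.
-/

theorem Submodule.bijective_mkQ_comp_subtype_iff_isCompl {R M : Type*} [Ring R]
    [AddCommGroup M] [Module R M] {p q : Submodule R M} :
    Function.Bijective (q.mkQ ∘ₗ p.subtype) ↔ IsCompl p q := by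
  rw [Function.Bijective, ← LinearMap.ker_eq_bot, ← LinearMap.range_eq_top, LinearMap.ker_comp,
    ker_mkQ, ← disjoint_iff_comap_eq_bot, LinearMap.range_comp, range_subtype, map_mkQ_eq_top,
    sup_comm, ← codisjoint_iff, isCompl_iff]

namespace LinearMap

variable {R M N : Type*} [Ring R] [AddCommGroup M] [Module R M] [AddCommGroup N] [Module R N]

theorem range_eq_map_of_codisjoint_of_le_ker (f : M →ₗ[R] N) {V W : Submodule R M}
    (hVW : Codisjoint V W) (hV : V ≤ ker f) : range f = W.map f := by
  rw [range_eq_map, ← hVW.eq_top, Submodule.map_sup, le_ker_iff_map.mp hV, bot_sup_eq]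

theorem ker_eq_of_isCompl_of_injOn (f : M →ₗ[R] N) {V W : Submodule R M} (hVW : IsCompl V W)
    (hV : V ≤ ker f) (hW : Set.InjOn f W) : ker f = V := by
  refine (eq_of_le_of_inf_le_of_sup_le (z := W) hV ?_ ?_).symm
  · rw [(disjoint_ker_iff_injOn.mpr hW).symm.eq_bot]
    exact bot_le
  · rw [hVW.sup_eq_top]
    exact le_top

theorem bijOn_range_of_isCompl_ker_range (f : M →ₗ[R] M) (h : IsCompl (ker f) (range f)) :
    Set.BijOn f (range f) (range f) := by
  refine ⟨fun _ _ ↦ mem_range_self f _, disjoint_ker_iff_injOn.mp h.symm.disjoint, ?_⟩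
  rw [Set.SurjOn, ← Submodule.map_coe,
    ← range_eq_map_of_codisjoint_of_le_ker f h.codisjoint le_rfl]

theorem exists_isCompl_bijOn_iff_isCompl_ker_range (f : M →ₗ[R] M) :
    (∃ V W : Submodule R M, IsCompl V W ∧ (∀ v ∈ V, f v = 0) ∧ Set.BijOn f (W : Set M) W) ↔
      IsCompl (ker f) (range f) := by
  constructor
  · rintro ⟨V, W, hVW, hV, hW⟩
    have hVker : V ≤ ker f := fun v hv ↦ hV v hv
    have hrange : range f = W := by
      rw [range_eq_map_of_codisjoint_of_le_ker f hVW.codisjoint hVker]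
      exact SetLike.coe_injective (by rw [Submodule.map_coe, hW.image_eq])
    rwa [ker_eq_of_isCompl_of_injOn f hVW hVker hW.injOn, hrange]
  · intro h
    exact ⟨ker f, range f, h, fun _ hv ↦ hv, bijOn_range_of_isCompl_ker_range f h⟩

end LinearMap

theorem semisimple_at_zero_iff_ker_to_coker_bijective_general
    {A M : Type*} [Ring A]
    [AddCommGroup M] [Module A M] (θ : M →ₗ[A] M) :
    (∃ V W : Submodule A M, IsCompl V W ∧ (∀ v ∈ V, θ v = 0) ∧
        Set.BijOn θ (W : Set M) (W : Set M)) ↔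
      Function.Bijective ⇑((LinearMap.range θ).mkQ ∘ₗ (LinearMap.ker θ).subtype) :=
  (LinearMap.exists_isCompl_bijOn_iff_isCompl_ker_range θ).trans
    Submodule.bijective_mkQ_comp_subtype_iff_isCompl.symm

/-- Let `A` be a semi-simple algebra over a field `k` and `M` a finitely
generated left `A`-module with endomorphism `θ`. Then `θ` is semi-simple at `0`
(i.e. `M = V ⊕ W` θ-equivariantly with `θ|_V = 0` and `θ|_W` an automorphism of `W`)
iff the canonical map `ker(θ) → M → coker(θ)` is an isomorphism. -/
theorem semisimple_at_zero_iff_ker_to_coker_bijective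
    {k A M : Type*} [Field k] [Ring A] [Algebra k A] [IsSemisimpleRing A]
    [AddCommGroup M] [Module A M] [Module.Finite A M] (θ : M →ₗ[A] M) :
    (∃ V W : Submodule A M, IsCompl V W ∧ (∀ v ∈ V, θ v = 0) ∧
        Set.BijOn θ (W : Set M) (W : Set M)) ↔
      Function.Bijective ⇑((LinearMap.range θ).mkQ ∘ₗ (LinearMap.ker θ).subtype) :=
  semisimple_at_zero_iff_ker_to_coker_bijective_general θ
end

section
/- Let F be a field and let η ∈ F[[T]] be a power series. Let L/F be a field extension and suppose that η, viewed in L[[T]], is the power series expansion of a rational function in L(T) (with denominator not vanishing at 0). Then η is the expansion of a rational function in F(T). -/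
/-!
For `d ≥ deg q` and `N ≥ max (deg p) d`, a pair `q * η = p` with `q(0) ≠ 0` is the same as a
vector `x ∈ F^{d+1}` with `x₀ ≠ 0` annihilated by the infinite matrix `(η_{N+1+k-i})_{k,i}`.
Such a solution of a linear system over `F` exists as soon as one exists over `L`: otherwise,
by duality in `F^{d+1}`, the coordinate form `x ↦ x₀` is an `F`-linear combination of finitely
many rows, and this identity, read over `L`, forces `y₀ = 0` for every solution `y` over `L`.
-/

open Polynomial PowerSeries Matrix

theorem Polynomial.mem_degreeLT_succ_iff {R : Type*} [Semiring R] {q : R[X]} {d : ℕ} :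
    q ∈ degreeLT R (d + 1) ↔ q.natDegree ≤ d := by
  rw [degreeLT_succ_eq_degreeLE, mem_degreeLE, natDegree_le_iff_degree_le]

theorem Matrix.exists_mulVec_eq_zero_apply_ne_zero_of_map_algebraMap
    {F L ι n : Type*} [Field F] [Field L] [Algebra F L] [Fintype n]
    (A : Matrix ι n F) {y : n → L} (hy : A.map (algebraMap F L) *ᵥ y = 0) {j : n}
    (hj : y j ≠ 0) : ∃ x : n → F, A *ᵥ x = 0 ∧ x j ≠ 0 := by
  classical
  by_contra! hA
  let evalAt : Module.Dual F (n → F) →ₗ[F] L :=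
    { toFun := fun φ => ∑ i, algebraMap F L (φ (Pi.single i 1)) * y i
      map_add' := fun φ ψ => by simp [add_mul, Finset.sum_add_distrib]
      map_smul' := fun c φ => by simp [Finset.mul_sum, Algebra.smul_def, mul_assoc] }
  let row : ι → Module.Dual F (n → F) := fun k => LinearMap.proj k ∘ₗ A.mulVecLin
  have hrow : ∀ k, row k ∈ LinearMap.ker evalAt := fun k => by
    simpa [evalAt, row, Pi.single_apply, mulVec, dotProduct] using congrFun hy k
  have hproj : LinearMap.proj j ∈ Submodule.span F (Set.range row) :=
    FiniteDimensional.mem_span_of_iInf_ker_le_ker fun x hx =>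
      hA x (funext fun k => by simpa [row] using Submodule.mem_iInf _ |>.1 hx k)
  have hevalAt_proj : evalAt (LinearMap.proj j) = 0 :=
    Submodule.span_le.2 (Set.range_subset_iff.2 hrow) hproj
  exact hj (by simpa [evalAt, Pi.single_apply] using hevalAt_proj)

namespace PowerSeries

variable {R : Type*} [CommRing R]

theorem coeff_coe_mul_eq_sum_fin {q : R[X]} {d m : ℕ} (hq : q.natDegree ≤ d) (hm : d ≤ m)
    (φ : R⟦X⟧) :
    coeff m ((q : R⟦X⟧) * φ) = ∑ i : Fin (d + 1), q.coeff i * coeff (m - i) φ := by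
  rw [coeff_mul, Finset.Nat.sum_antidiagonal_eq_sum_range_succ_mk,
    Fin.sum_univ_eq_sum_range (fun i => q.coeff i * coeff (m - i) φ)]
  simp only [Polynomial.coeff_coe]
  refine (Finset.sum_subset (Finset.range_subset_range.2 (by omega)) fun i _ hi => ?_).symm
  rw [Finset.mem_range, not_lt] at hi
  rw [Polynomial.coeff_eq_zero_of_natDegree_lt (by omega), zero_mul]

theorem coe_trunc_eq_self_of_coeff_eq_zero {φ : R⟦X⟧} {n : ℕ}
    (h : ∀ m, n ≤ m → coeff m φ = 0) : (trunc n φ : R⟦X⟧) = φ := by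
  ext m
  rw [Polynomial.coeff_coe, coeff_trunc]
  split_ifs with hm
  · rfl
  · exact (h m (not_lt.1 hm)).symm

noncomputable def tailMatrix (φ : R⟦X⟧) (N d : ℕ) : Matrix ℕ (Fin (d + 1)) R :=
  Matrix.of fun k i => coeff (N + 1 + k - i) φ

theorem tailMatrix_mulVec_degreeLTEquiv {N d : ℕ} (hd : d ≤ N + 1) (φ : R⟦X⟧)
    (q : degreeLT R (d + 1)) (k : ℕ) :
    (tailMatrix φ N d *ᵥ degreeLTEquiv R (d + 1) q) k =
      coeff (N + 1 + k) (((q : R[X]) : R⟦X⟧) * φ) := by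
  rw [coeff_coe_mul_eq_sum_fin (mem_degreeLT_succ_iff.1 q.2) (by omega)]
  simp [tailMatrix, mulVec, dotProduct, degreeLTEquiv, mul_comm]

theorem map_tailMatrix {S : Type*} [CommRing S] (f : R →+* S) (φ : R⟦X⟧) (N d : ℕ) :
    (tailMatrix φ N d).map f = tailMatrix (map f φ) N d := by
  ext k i
  simp [tailMatrix]

end PowerSeries

/-- Let `F` be a field and `η ∈ F[[T]]` a power series. Let `L/F` be a
field extension and suppose that `η`, viewed in `L[[T]]`, is the power series expansion
of a rational function of `L(T)` (with denominator not vanishing at `0`). Then `η` is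
the expansion of a rational function in `F(T)`. -/
theorem rational_descends_of_rational_over_extension
    {F L : Type*} [Field F] [Field L] [Algebra F L] (η : PowerSeries F)
    (h : ∃ P Q : Polynomial L, Q.coeff 0 ≠ 0 ∧
      (Q : PowerSeries L) * PowerSeries.map (algebraMap F L) η = (P : PowerSeries L)) :
    ∃ p q : Polynomial F, q.coeff 0 ≠ 0 ∧
      (q : PowerSeries F) * η = (p : PowerSeries F) := by
  obtain ⟨P, Q, hQ0, hPQ⟩ := h
  set d := Q.natDegree
  set N := max P.natDegree d
  let Q' : degreeLT L (d + 1) := ⟨Q, mem_degreeLT_succ_iff.2 le_rfl⟩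
  have hL : (tailMatrix η N d).map (algebraMap F L) *ᵥ degreeLTEquiv L (d + 1) Q' = 0 := by
    ext k
    rw [map_tailMatrix, tailMatrix_mulVec_degreeLTEquiv (by omega), hPQ, Polynomial.coeff_coe]
    exact Polynomial.coeff_eq_zero_of_natDegree_lt (by omega)
  obtain ⟨x, hx, hx0⟩ :=
    (tailMatrix η N d).exists_mulVec_eq_zero_apply_ne_zero_of_map_algebraMap hL (j := 0) hQ0
  set q := (degreeLTEquiv F (d + 1)).symm x
  refine ⟨trunc (N + 1) ((q : F[X]) * η), q, ?_, ?_⟩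
  · rwa [← (degreeLTEquiv F (d + 1)).apply_symm_apply x] at hx0
  · refine (coe_trunc_eq_self_of_coeff_eq_zero fun m hm => ?_).symm
    obtain ⟨k, rfl⟩ := Nat.exists_eq_add_of_le hm
    rw [← tailMatrix_mulVec_degreeLTEquiv (by omega), LinearEquiv.apply_symm_apply, hx,
      Pi.zero_apply]
end
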